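/- Let (X_m) be a birth-death chain on ℕ started at k ≥ 1 with up-probabilities r_n, down-probabilities l_n = 1 − r_n from n ≥ 1, and 0 absorbing. If lim_{n→∞} (l_1⋯l_n)/(r_1⋯r_n) = 0, then E[X_m] → ∞ as m → ∞. -/

import Mathlib

/-
The scale function `S n = t 0 + ⋯ + t (n - 1)` is harmonic for the chain and vanishes at the
absorbing state, so `E[S(X_m)] = S k > 0` for every `m`. Every positive state is transient:
`P(X_m = 0)` grows by at least `l₁ P(X_m = 1)` at each step, so `∑ₘ P(X_m = 1) < ∞`, and
`P(X_{m+1} = y) ≥ l_{y+1} P(X_m = y + 1)` carries this up to every `y ≥ 1`. Hence `S(X_m)` has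
asymptotically no mass on any finite set of states, while `t n → 0` makes `S` sublinear
(Cesàro), so `S k ≤ o(1) + ε E[X_m]` for every `ε > 0`.
-/

open MeasureTheory ProbabilityTheory Filter Set

/-- A birth-death chain on ℕ with up-probabilities `r n` from state `n ≥ 1`,
down-probabilities `1 - r n`, state `0` absorbing, started at `k`. -/
structure IsBirthDeathChain {Ω : Type*} [MeasurableSpace Ω] (μ : Measure Ω)
    (X : ℕ → Ω → ℕ) (r : ℕ → ℝ) (k : ℕ) : Prop where
  isProb : IsProbabilityMeasure μ
  meas : ∀ m, Measurable (X m)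
  start : ∀ᵐ ω ∂μ, X 0 ω = k
  step_up : ∀ (m : ℕ) (path : ℕ → ℕ), 0 < path m →
    μ (⋂ i ∈ Finset.range (m + 1), {ω | X i ω = path i}) ≠ 0 →
    μ[{ω | X (m + 1) ω = path m + 1} | ⋂ i ∈ Finset.range (m + 1), {ω | X i ω = path i}]
      = ENNReal.ofReal (r (path m))
  step_down : ∀ (m : ℕ) (path : ℕ → ℕ), 0 < path m →
    μ (⋂ i ∈ Finset.range (m + 1), {ω | X i ω = path i}) ≠ 0 →
    μ[{ω | X (m + 1) ω = path m - 1} | ⋂ i ∈ Finset.range (m + 1), {ω | X i ω = path i}]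
      = ENNReal.ofReal (1 - r (path m))
  absorb : ∀ (m : ℕ) (path : ℕ → ℕ), path m = 0 →
    μ (⋂ i ∈ Finset.range (m + 1), {ω | X i ω = path i}) ≠ 0 →
    μ[{ω | X (m + 1) ω = 0} | ⋂ i ∈ Finset.range (m + 1), {ω | X i ω = path i}] = 1

open scoped ENNReal Topology

section CountableValued

variable {Ω α : Type*} [MeasurableSpace Ω] [MeasurableSpace α] [MeasurableSingletonClass α]
  {μ : Measure Ω}

lemma measure_inter_preimage_eq_zero_of_sum_eq [IsFiniteMeasure μ] {Y : Ω → α}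
    (hY : Measurable Y) {B : Set Ω} (hB : MeasurableSet B) {s : Finset α}
    (hs : ∑ a ∈ s, μ ({ω | Y ω = a} ∩ B) = μ B) {b : α} (hb : b ∉ s) :
    μ ({ω | Y ω = b} ∩ B) = 0 := by
  classical
  have hle : μ (Y ⁻¹' {b} ∩ B) + μ B ≤ 0 + μ B :=
    calc μ (Y ⁻¹' {b} ∩ B) + μ B = ∑ a ∈ insert b s, μ (Y ⁻¹' {a} ∩ B) := by
          rw [Finset.sum_insert hb, ← hs]; rfl
      _ = μ (⋃ a ∈ insert b s, Y ⁻¹' {a} ∩ B) :=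
          (measure_biUnion_finset (fun a _ a' _ haa' =>
            ((pairwise_disjoint_fiber Y haa').mono inter_subset_left inter_subset_left))
            fun a _ => (hY (measurableSet_singleton a)).inter hB).symm
      _ ≤ 0 + μ B := by
          rw [zero_add]; exact measure_mono (iUnion₂_subset fun _ _ => inter_subset_right)
  exact nonpos_iff_eq_zero.1 (ENNReal.le_of_add_le_add_right (measure_ne_top μ B) hle)

variable [Countable α]

lemma measure_eq_tsum_inter_preimage {Y : Ω → α} (hY : Measurable Y) (A : Set Ω) :
    μ A = ∑' a, μ (A ∩ {ω | Y ω = a}) := by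
  have hfib : ∀ a, MeasurableSet (Y ⁻¹' {a}) := fun a => hY (measurableSet_singleton a)
  calc μ A = μ.restrict A (⋃ a, Y ⁻¹' {a}) := by
        rw [← preimage_iUnion, iUnion_of_singleton, preimage_univ, Measure.restrict_apply_univ]
    _ = ∑' a, μ.restrict A (Y ⁻¹' {a}) := measure_iUnion (pairwise_disjoint_fiber Y) hfib
    _ = ∑' a, μ (A ∩ {ω | Y ω = a}) := by
        simp only [Measure.restrict_apply (hfib _), inter_comm]; rfl

lemma lintegral_comp_eq_tsum {Y : Ω → α} (hY : Measurable Y) (f : α → ℝ≥0∞) :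
    ∫⁻ ω, f (Y ω) ∂μ = ∑' a, f a * μ {ω | Y ω = a} := by
  rw [← lintegral_map (measurable_of_countable f) hY, lintegral_countable']
  simp_rw [Measure.map_apply hY (measurableSet_singleton _)]
  rfl

/-- The histories `(X 0, …, X m)` ending at `x` cut `{X m = x}` into countably many cylinders,
on each of which `T` has conditional probability `c`. -/
lemma measure_inter_eq_mul_of_cond_path [IsFiniteMeasure μ] {X : ℕ → Ω → α}
    (hX : ∀ n, Measurable (X n)) {m : ℕ} {x : α} {T : Set Ω} {c : ℝ≥0∞}
    (h : ∀ p : ℕ → α, p m = x → μ (⋂ i ∈ Finset.range (m + 1), {ω | X i ω = p i}) ≠ 0 →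
      μ[T | ⋂ i ∈ Finset.range (m + 1), {ω | X i ω = p i}] = c) :
    μ (T ∩ {ω | X m ω = x}) = c * μ {ω | X m ω = x} := by
  set hist : Ω → (Fin (m + 1) → α) := fun ω i => X i ω
  set S : Set (Fin (m + 1) → α) := {v | v (Fin.last m) = x}
  have hhist : Measurable hist := measurable_pi_lambda _ fun i => hX i
  have hfib : ∀ v ∈ S, MeasurableSet (hist ⁻¹' {v}) := fun v _ => hhist (measurableSet_singleton v)
  have hpath : ∀ v ∈ S, μ.restrict T (hist ⁻¹' {v}) = c * μ (hist ⁻¹' {v}) := by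
    intro v hv
    let p : ℕ → α := fun i => if hi : i < m + 1 then v ⟨i, hi⟩ else x
    have hp : ⋂ i ∈ Finset.range (m + 1), {ω | X i ω = p i} = hist ⁻¹' {v} := by
      ext ω
      simp only [mem_iInter, Finset.mem_range, mem_ofPred_eq, mem_preimage, mem_singleton_iff,
        hist, funext_iff, Fin.forall_iff, p]
      exact forall₂_congr fun i hi => by rw [dif_pos hi]
    have hmeas : MeasurableSet (⋂ i ∈ Finset.range (m + 1), {ω | X i ω = p i}) := by
      rw [hp]; exact hfib v hv
    rw [Measure.restrict_apply (hfib v hv), ← hp, ← cond_mul_eq_inter hmeas T μ]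
    by_cases h0 : μ (⋂ i ∈ Finset.range (m + 1), {ω | X i ω = p i}) = 0
    · rw [h0, mul_zero, mul_zero]
    · rw [h p (by simp only [p, dif_pos (Nat.lt_succ_self m)]; exact hv) h0]
  calc μ (T ∩ {ω | X m ω = x}) = μ.restrict T (hist ⁻¹' S) := by
        rw [Measure.restrict_apply (hhist S.to_countable.measurableSet), inter_comm]; rfl
    _ = c * μ {ω | X m ω = x} := by
        rw [← tsum_measure_preimage_singleton S.to_countable hfib,
          tsum_congr fun v : S => hpath v v.2, ENNReal.tsum_mul_left,
          tsum_measure_preimage_singleton S.to_countable hfib]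
        rfl

end CountableValued

lemma tendsto_ofReal_sum_range_div_natCast {u : ℕ → ℝ} (hu : Tendsto u atTop (𝓝 0)) :
    Tendsto (fun n : ℕ => ENNReal.ofReal (∑ i ∈ Finset.range n, u i) / n) atTop (𝓝 0) := by
  have h := ENNReal.tendsto_ofReal hu.cesaro
  rw [ENNReal.ofReal_zero] at h
  refine h.congr' (eventually_atTop.2 ⟨1, fun n hn => ?_⟩)
  rw [ENNReal.ofReal_mul (by positivity), ENNReal.ofReal_inv_of_pos (by positivity),
    ENNReal.ofReal_natCast]
  exact ENNReal.div_eq_inv_mul.symm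

theorem tendsto_tsum_natCast_mul_nhds_top {π : ℕ → ℕ → ℝ≥0∞} {h : ℕ → ℝ≥0∞} {c : ℝ≥0∞}
    (hc₀ : c ≠ 0) (hc : c ≠ ⊤) (hinv : ∀ m, ∑' x, h x * π m x = c)
    (hπ : ∀ x, Tendsto (fun m => h x * π m x) atTop (𝓝 0))
    (hh : Tendsto (fun n : ℕ => h n / n) atTop (𝓝 0)) :
    Tendsto (fun m => ∑' x : ℕ, (x : ℝ≥0∞) * π m x) atTop (𝓝 ⊤) := by
  rw [ENNReal.tendsto_nhds_top_iff_nnreal]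
  intro C
  set δ := c / 2
  have hδ : 0 < δ := ENNReal.half_pos hc₀
  set ε := δ / (C + 1)
  have hε : 0 < ε := ENNReal.div_pos hδ.ne' (by simp)
  have hεtop : ε ≠ ⊤ := ENNReal.div_ne_top (ENNReal.div_ne_top hc two_ne_zero) (by simp)
  have hεC : ε * C < δ :=
    calc ε * C < ε * (C + 1) :=
          ENNReal.mul_lt_mul_right hε.ne' hεtop
            (ENNReal.lt_add_right ENNReal.coe_ne_top one_ne_zero)
      _ = δ := ENNReal.div_mul_cancel (by simp) (by simp)
  obtain ⟨N, hN⟩ := eventually_atTop.1 (hh.eventually (gt_mem_nhds hε))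
  have hsplit : ∀ m, c ≤ ∑ x ∈ Finset.range N, h x * π m x + ε * ∑' x : ℕ, (x : ℝ≥0∞) * π m x := by
    intro m
    calc c = ∑' x, h x * π m x := (hinv m).symm
      _ ≤ ∑' x, ((if x < N then h x * π m x else 0) + ε * (x * π m x)) := by
          refine ENNReal.tsum_le_tsum fun x => ?_
          split_ifs with hx
          · exact le_self_add
          · have hhx : h x ≤ ε * x :=
              (ENNReal.div_le_iff_le_mul (Or.inr hεtop) (Or.inl (ENNReal.natCast_ne_top x))).1
                (hN x (not_lt.1 hx)).le
            rw [zero_add, ← mul_assoc]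
            exact mul_le_mul_left hhx _
      _ = ∑ x ∈ Finset.range N, h x * π m x + ε * ∑' x : ℕ, (x : ℝ≥0∞) * π m x := by
          rw [ENNReal.tsum_add, ENNReal.tsum_mul_left,
            tsum_eq_sum (s := Finset.range N) fun x hx => if_neg (by simpa using hx)]
          congr 1
          exact Finset.sum_congr rfl fun x hx => if_pos (Finset.mem_range.1 hx)
  have hhead : Tendsto (fun m => ∑ x ∈ Finset.range N, h x * π m x) atTop (𝓝 0) := by
    simpa using tendsto_finsetSum (Finset.range N) fun x _ => hπ x
  filter_upwards [hhead.eventually (gt_mem_nhds hδ)] with m hm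
  by_contra! hB
  refine lt_irrefl c ?_
  calc c ≤ ∑ x ∈ Finset.range N, h x * π m x + ε * ∑' x : ℕ, (x : ℝ≥0∞) * π m x := hsplit m
    _ < δ + δ := ENNReal.add_lt_add hm ((mul_le_mul_right hB ε).trans_lt hεC)
    _ = c := ENNReal.add_halves c

def birthDeathKernel (r : ℕ → ℝ) (x y : ℕ) : ℝ≥0∞ :=
  if x = 0 then (if y = 0 then 1 else 0)
  else if y = x + 1 then ENNReal.ofReal (r x)
  else if y = x - 1 then ENNReal.ofReal (1 - r x) else 0

lemma birthDeathKernel_eq_zero_of_lt {r : ℕ → ℝ} {x y : ℕ} (h : x + 1 < y) :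
    birthDeathKernel r x y = 0 := by
  unfold birthDeathKernel
  split_ifs <;> first | rfl | omega

lemma birthDeathKernel_zero_zero (r : ℕ → ℝ) : birthDeathKernel r 0 0 = 1 := rfl

lemma birthDeathKernel_succ_self (r : ℕ → ℝ) (x : ℕ) :
    birthDeathKernel r (x + 1) x = ENNReal.ofReal (1 - r (x + 1)) := by
  rw [birthDeathKernel, if_neg x.succ_ne_zero, if_neg (by omega), if_pos (by omega)]

lemma tsum_birthDeathKernel_mul {r : ℕ → ℝ} {x : ℕ} (hx : x ≠ 0) (f : ℕ → ℝ≥0∞) :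
    ∑' y, birthDeathKernel r x y * f y
      = ENNReal.ofReal (r x) * f (x + 1) + ENNReal.ofReal (1 - r x) * f (x - 1) := by
  rw [tsum_eq_sum (s := {x + 1, x - 1}), Finset.sum_pair (by omega)]
  · simp [birthDeathKernel, hx]
  · intro y hy
    simp only [Finset.mem_insert, Finset.mem_singleton, not_or] at hy
    simp [birthDeathKernel, hx, hy.1, hy.2]

noncomputable def birthDeathRatio (r : ℕ → ℝ) (n : ℕ) : ℝ := ∏ i ∈ Finset.Icc 1 n, (1 - r i) / r i

noncomputable def birthDeathScale (r : ℕ → ℝ) (n : ℕ) : ℝ :=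
  ∑ i ∈ Finset.range n, birthDeathRatio r i

section Scale

variable {r : ℕ → ℝ}

lemma birthDeathRatio_nonneg (hr : ∀ n, 1 ≤ n → r n ∈ Ioo (0 : ℝ) 1) (n : ℕ) :
    0 ≤ birthDeathRatio r n :=
  Finset.prod_nonneg fun i hi =>
    have hri := hr i (Finset.mem_Icc.1 hi).1
    div_nonneg (sub_nonneg.2 hri.2.le) hri.1.le

lemma birthDeathRatio_succ (n : ℕ) :
    birthDeathRatio r (n + 1) = birthDeathRatio r n * ((1 - r (n + 1)) / r (n + 1)) :=
  Finset.prod_Icc_succ_top (by omega) _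

lemma one_le_birthDeathScale (hr : ∀ n, 1 ≤ n → r n ∈ Ioo (0 : ℝ) 1) {n : ℕ} (hn : 1 ≤ n) :
    1 ≤ birthDeathScale r n :=
  calc 1 = birthDeathRatio r 0 := by simp [birthDeathRatio]
    _ ≤ birthDeathScale r n :=
      Finset.single_le_sum (fun i _ => birthDeathRatio_nonneg hr i) (Finset.mem_range.2 hn)

lemma birthDeathScale_nonneg (hr : ∀ n, 1 ≤ n → r n ∈ Ioo (0 : ℝ) 1) (n : ℕ) :
    0 ≤ birthDeathScale r n :=
  Finset.sum_nonneg fun i _ => birthDeathRatio_nonneg hr i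

lemma birthDeathScale_harmonic (hr : ∀ n, 1 ≤ n → r n ∈ Ioo (0 : ℝ) 1) {x : ℕ} (hx : 1 ≤ x) :
    r x * birthDeathScale r (x + 1) + (1 - r x) * birthDeathScale r (x - 1)
      = birthDeathScale r x := by
  obtain ⟨n, rfl⟩ := Nat.exists_eq_add_of_le' hx
  have hrn := (hr (n + 1) hx).1.ne'
  simp only [birthDeathScale, Finset.sum_range_succ, birthDeathRatio_succ, Nat.add_sub_cancel]
  field_simp
  ring

lemma tsum_birthDeathKernel_mul_scale (hr : ∀ n, 1 ≤ n → r n ∈ Ioo (0 : ℝ) 1) (x : ℕ) :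
    ∑' y, birthDeathKernel r x y * ENNReal.ofReal (birthDeathScale r y)
      = ENNReal.ofReal (birthDeathScale r x) := by
  rcases Nat.eq_zero_or_pos x with rfl | hx
  · simp [birthDeathKernel]
  · have hrx := hr x hx
    rw [tsum_birthDeathKernel_mul hx.ne', ← ENNReal.ofReal_mul hrx.1.le,
      ← ENNReal.ofReal_mul (sub_nonneg.2 hrx.2.le),
      ← ENNReal.ofReal_add (mul_nonneg hrx.1.le (birthDeathScale_nonneg hr _))
        (mul_nonneg (sub_nonneg.2 hrx.2.le) (birthDeathScale_nonneg hr _)),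
      birthDeathScale_harmonic hr hx]

end Scale

namespace IsBirthDeathChain

variable {Ω : Type*} [MeasurableSpace Ω] {μ : Measure Ω} {X : ℕ → Ω → ℕ} {r : ℕ → ℝ} {k : ℕ}

lemma measure_succ_inter (hX : IsBirthDeathChain μ X r k)
    (hr : ∀ n, 1 ≤ n → r n ∈ Ioo (0 : ℝ) 1) (m x y : ℕ) :
    μ ({ω | X (m + 1) ω = y} ∩ {ω | X m ω = x}) = birthDeathKernel r x y * μ {ω | X m ω = x} := by
  have := hX.isProb
  have hB : MeasurableSet {ω | X m ω = x} := hX.meas m (measurableSet_singleton x)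
  rcases Nat.eq_zero_or_pos x with rfl | hx
  · have h0 := measure_inter_eq_mul_of_cond_path (μ := μ) (x := 0) hX.meas (hX.absorb m)
    by_cases hy : y = 0
    · simpa [birthDeathKernel, hy] using h0
    · rw [birthDeathKernel, if_pos rfl, if_neg hy, zero_mul]
      exact measure_inter_preimage_eq_zero_of_sum_eq (hX.meas (m + 1)) hB (s := {0})
        (by rw [Finset.sum_singleton, h0, one_mul]) (by simpa using hy)
  · have hup := measure_inter_eq_mul_of_cond_path (μ := μ) (m := m) (x := x)
      (T := {ω | X (m + 1) ω = x + 1}) (c := ENNReal.ofReal (r x)) hX.meas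
      fun p hp h0 => by subst hp; exact hX.step_up m p hx h0
    have hdown := measure_inter_eq_mul_of_cond_path (μ := μ) (m := m) (x := x)
      (T := {ω | X (m + 1) ω = x - 1}) (c := ENNReal.ofReal (1 - r x)) hX.meas
      fun p hp h0 => by subst hp; exact hX.step_down m p hx h0
    by_cases hy₁ : y = x + 1
    · subst hy₁; simpa [birthDeathKernel, hx.ne'] using hup
    by_cases hy₂ : y = x - 1
    · subst hy₂; simpa [birthDeathKernel, hx.ne', hy₁] using hdown
    rw [birthDeathKernel, if_neg hx.ne', if_neg hy₁, if_neg hy₂, zero_mul]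
    have hrx := hr x hx
    refine measure_inter_preimage_eq_zero_of_sum_eq (hX.meas (m + 1)) hB
      (s := {x + 1, x - 1}) ?_ (by simp [hy₁, hy₂])
    rw [Finset.sum_pair (by omega)]
    rw [hup, hdown, ← add_mul, ← ENNReal.ofReal_add hrx.1.le (by linarith [hrx.2]), add_sub_cancel,
      ENNReal.ofReal_one, one_mul]

lemma measure_succ_eq_tsum (hX : IsBirthDeathChain μ X r k)
    (hr : ∀ n, 1 ≤ n → r n ∈ Ioo (0 : ℝ) 1) (m y : ℕ) :
    μ {ω | X (m + 1) ω = y} = ∑' x, birthDeathKernel r x y * μ {ω | X m ω = x} := by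
  rw [measure_eq_tsum_inter_preimage (hX.meas m)]
  exact tsum_congr fun x => hX.measure_succ_inter hr m x y

lemma tsum_mul_measure_succ (hX : IsBirthDeathChain μ X r k)
    (hr : ∀ n, 1 ≤ n → r n ∈ Ioo (0 : ℝ) 1) (m : ℕ) (f : ℕ → ℝ≥0∞) :
    ∑' y, f y * μ {ω | X (m + 1) ω = y}
      = ∑' x, (∑' y, birthDeathKernel r x y * f y) * μ {ω | X m ω = x} := by
  simp_rw [hX.measure_succ_eq_tsum hr, ← ENNReal.tsum_mul_left, ← ENNReal.tsum_mul_right]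
  rw [ENNReal.tsum_comm]
  exact tsum_congr fun x => tsum_congr fun y => by ring

lemma tsum_mul_measure_zero (hX : IsBirthDeathChain μ X r k) (f : ℕ → ℝ≥0∞) :
    ∑' x, f x * μ {ω | X 0 ω = x} = f k := by
  have := hX.isProb
  rw [← lintegral_comp_eq_tsum (hX.meas 0), lintegral_congr_ae (hX.start.mono fun ω h => by rw [h]),
    lintegral_const, measure_univ, mul_one]

lemma measure_eq_zero_of_lt (hX : IsBirthDeathChain μ X r k)
    (hr : ∀ n, 1 ≤ n → r n ∈ Ioo (0 : ℝ) 1) {m x : ℕ} (hx : k + m < x) :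
    μ {ω | X m ω = x} = 0 := by
  induction m generalizing x with
  | zero =>
    exact measure_mono_null (fun ω (hω : X 0 ω = x) => show ¬X 0 ω = k by omega)
      (ae_iff.1 hX.start)
  | succ m ih =>
    rw [hX.measure_succ_eq_tsum hr, ENNReal.tsum_eq_zero]
    intro y
    rcases lt_or_ge (k + m) y with hy | hy
    · rw [ih hy, mul_zero]
    · rw [birthDeathKernel_eq_zero_of_lt (by omega), zero_mul]

lemma sum_range_measure_one_le (hX : IsBirthDeathChain μ X r k)
    (hr : ∀ n, 1 ≤ n → r n ∈ Ioo (0 : ℝ) 1) (M : ℕ) :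
    ∑ m ∈ Finset.range M, ENNReal.ofReal (1 - r 1) * μ {ω | X m ω = 1}
      ≤ μ {ω | X M ω = 0} := by
  induction M with
  | zero => simp
  | succ M ih =>
    calc ∑ m ∈ Finset.range (M + 1), ENNReal.ofReal (1 - r 1) * μ {ω | X m ω = 1}
        ≤ ∑ x ∈ {0, 1}, birthDeathKernel r x 0 * μ {ω | X M ω = x} := by
          rw [Finset.sum_range_succ, Finset.sum_pair zero_ne_one]
          have h10 : birthDeathKernel r 1 0 = ENNReal.ofReal (1 - r 1) :=
            birthDeathKernel_succ_self r 0
          rw [birthDeathKernel_zero_zero, one_mul, h10]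
          gcongr
      _ ≤ μ {ω | X (M + 1) ω = 0} := by
          rw [hX.measure_succ_eq_tsum hr]; exact ENNReal.sum_le_tsum _

lemma tsum_measure_ne_top (hX : IsBirthDeathChain μ X r k)
    (hr : ∀ n, 1 ≤ n → r n ∈ Ioo (0 : ℝ) 1) {y : ℕ} (hy : 1 ≤ y) :
    ∑' m, μ {ω | X m ω = y} ≠ ⊤ := by
  have := hX.isProb
  have hl : ∀ n, 1 ≤ n → ENNReal.ofReal (1 - r n) ≠ 0 := fun n hn => by
    simpa using (hr n hn).2
  induction y, hy using Nat.le_induction with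
  | base =>
    refine (ENNReal.lt_top_of_mul_ne_top_right
      (ne_top_of_le_ne_top ENNReal.one_ne_top ?_) (hl 1 le_rfl)).ne
    rw [← ENNReal.tsum_mul_left]
    exact ENNReal.tsum_le_of_sum_range_le fun M =>
      (hX.sum_range_measure_one_le hr M).trans prob_le_one
  | succ y hy ih =>
    refine (ENNReal.lt_top_of_mul_ne_top_right
      (ne_top_of_le_ne_top ih ?_) (hl (y + 1) (by omega))).ne
    rw [← ENNReal.tsum_mul_left]
    calc ∑' m, ENNReal.ofReal (1 - r (y + 1)) * μ {ω | X m ω = y + 1}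
        ≤ ∑' m, μ {ω | X (m + 1) ω = y} := ENNReal.tsum_le_tsum fun m => by
          rw [hX.measure_succ_eq_tsum hr, ← birthDeathKernel_succ_self]
          exact ENNReal.le_tsum (f := fun x => birthDeathKernel r x y * μ {ω | X m ω = x}) (y + 1)
      _ ≤ ∑' m, μ {ω | X m ω = y} :=
          ENNReal.tsum_comp_le_tsum_of_injective (add_left_injective 1) _

lemma tendsto_measure_eq_zero (hX : IsBirthDeathChain μ X r k)
    (hr : ∀ n, 1 ≤ n → r n ∈ Ioo (0 : ℝ) 1) {y : ℕ} (hy : 1 ≤ y) :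
    Tendsto (fun m => μ {ω | X m ω = y}) atTop (𝓝 0) :=
  ENNReal.tendsto_atTop_zero_of_tsum_ne_top (hX.tsum_measure_ne_top hr hy)

lemma tsum_scale_mul_measure (hX : IsBirthDeathChain μ X r k)
    (hr : ∀ n, 1 ≤ n → r n ∈ Ioo (0 : ℝ) 1) (m : ℕ) :
    ∑' x, ENNReal.ofReal (birthDeathScale r x) * μ {ω | X m ω = x}
      = ENNReal.ofReal (birthDeathScale r k) := by
  induction m with
  | zero => exact hX.tsum_mul_measure_zero _
  | succ m ih =>
    rw [hX.tsum_mul_measure_succ hr]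
    simpa only [tsum_birthDeathKernel_mul_scale hr] using ih

lemma ofReal_integral_eq_tsum (hX : IsBirthDeathChain μ X r k)
    (hr : ∀ n, 1 ≤ n → r n ∈ Ioo (0 : ℝ) 1) (m : ℕ) :
    ENNReal.ofReal (∫ ω, (X m ω : ℝ) ∂μ) = ∑' x : ℕ, (x : ℝ≥0∞) * μ {ω | X m ω = x} := by
  have := hX.isProb
  have hfin : ∑' x : ℕ, (x : ℝ≥0∞) * μ {ω | X m ω = x} ≠ ⊤ := by
    rw [tsum_eq_sum (s := Finset.range (k + m + 1)) fun x hx => by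
      rw [hX.measure_eq_zero_of_lt hr (by simp at hx; omega), mul_zero]]
    exact ENNReal.sum_ne_top.2 fun x _ =>
      ENNReal.mul_ne_top (ENNReal.natCast_ne_top x) (measure_ne_top μ _)
  have hlin := lintegral_comp_eq_tsum (μ := μ) (hX.meas m) (fun x : ℕ => (x : ℝ≥0∞))
  rw [integral_eq_lintegral_of_nonneg_ae (ae_of_all _ fun ω => Nat.cast_nonneg _)
    ((measurable_of_countable (fun n : ℕ => (n : ℝ))).comp (hX.meas m)).aestronglyMeasurable]
  simp_rw [ENNReal.ofReal_natCast]
  rw [hlin, ENNReal.ofReal_toReal hfin]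

end IsBirthDeathChain

/-- If `tₙ = (l₁⋯lₙ)/(r₁⋯rₙ) → 0`, then `E[X_m] → ∞`. -/
theorem expected_value_tendsto_atTop {Ω : Type*} [MeasurableSpace Ω] (μ : Measure Ω)
    (X : ℕ → Ω → ℕ) (r : ℕ → ℝ) (k : ℕ) (hk : 1 ≤ k)
    (hr : ∀ n, 1 ≤ n → r n ∈ Set.Ioo (0 : ℝ) 1)
    (hX : IsBirthDeathChain μ X r k)
    (t : ℕ → ℝ) (ht : ∀ n, t n = ∏ i ∈ Finset.Icc 1 n, ((1 - r i) / r i))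
    (hlim : Tendsto t atTop (nhds 0)) :
    Tendsto (fun m => ∫ ω, (X m ω : ℝ) ∂μ) atTop atTop := by
  obtain rfl : t = birthDeathRatio r := funext ht
  rw [← ENNReal.tendsto_ofReal_nhds_top]
  simp_rw [hX.ofReal_integral_eq_tsum hr]
  refine tendsto_tsum_natCast_mul_nhds_top
    (ENNReal.ofReal_pos.2 (one_pos.trans_le (one_le_birthDeathScale hr hk))).ne'
    ENNReal.ofReal_ne_top (hX.tsum_scale_mul_measure hr) (fun x => ?_)
    (tendsto_ofReal_sum_range_div_natCast hlim)
  rcases Nat.eq_zero_or_pos x with rfl | hx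
  · simp [birthDeathScale]
  · simpa using ENNReal.Tendsto.const_mul (hX.tendsto_measure_eq_zero hr hx)
      (Or.inr ENNReal.ofReal_ne_top)
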